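/- If α·σ_max < 1 with α > 0, then for every S ⊆ V and every ℓ ≥ 1 the tail of the GED-Walk series satisfies GED_{>ℓ}(S) ≤ |V|² · (α·σ_max)^{ℓ+1} / (1 − α·σ_max). -/

import Mathlib

open scoped BigOperators

/-- `p : Fin (i+1) → V` is a walk of length `i` in `G`:
a sequence of `i+1` vertices in which consecutive vertices are adjacent. -/
def SimpleGraph.IsWalkFun {V : Type*} (G : SimpleGraph V) (i : ℕ) (p : Fin (i + 1) → V) : Prop :=
  ∀ j : Fin i, G.Adj (p j.castSucc) (p j.succ)

instance {V : Type*} (G : SimpleGraph V) [DecidableRel G.Adj] (i : ℕ) :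
    DecidablePred (G.IsWalkFun i) := fun p =>
  decidable_of_iff (∀ j : Fin i, G.Adj (p j.castSucc) (p j.succ)) Iff.rfl

/-- `φ_i(S)`: the number of walks of length `i` in `G` containing at least one vertex of `S`. -/
def SimpleGraph.phiCount {V : Type*} [Fintype V] [DecidableEq V] (G : SimpleGraph V)
    [DecidableRel G.Adj] (i : ℕ) (S : Finset V) : ℕ :=
  (Finset.univ.filter fun p : Fin (i + 1) → V => G.IsWalkFun i p ∧ ∃ j, p j ∈ S).card

/-- The total number of walks of length `i` in `G`. -/
def SimpleGraph.walkCount {V : Type*} [Fintype V] [DecidableEq V] (G : SimpleGraph V)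
    [DecidableRel G.Adj] (i : ℕ) : ℕ :=
  (Finset.univ.filter fun p : Fin (i + 1) → V => G.IsWalkFun i p).card

/-- `φ^miss_i(v, S)`: the number of walks of length `i` ending at `v` containing no vertex of `S`. -/
def SimpleGraph.missCount {V : Type*} [Fintype V] [DecidableEq V] (G : SimpleGraph V)
    [DecidableRel G.Adj] (i : ℕ) (v : V) (S : Finset V) : ℕ :=
  (Finset.univ.filter fun p : Fin (i + 1) → V =>
    G.IsWalkFun i p ∧ p (Fin.last i) = v ∧ ∀ j, p j ∉ S).card

/-- `φ^hit_i(v, S)`: the number of walks of length `i` ending at `v` containing at least one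
vertex of `S`. -/
def SimpleGraph.hitCount {V : Type*} [Fintype V] [DecidableEq V] (G : SimpleGraph V)
    [DecidableRel G.Adj] (i : ℕ) (v : V) (S : Finset V) : ℕ :=
  (Finset.univ.filter fun p : Fin (i + 1) → V =>
    G.IsWalkFun i p ∧ p (Fin.last i) = v ∧ ∃ j, p j ∈ S).card

/-- `s_j(x, S)`: the number of walks of length `j` starting at `x` containing no vertex of `S`. -/
def SimpleGraph.startMissCount {V : Type*} [Fintype V] [DecidableEq V] (G : SimpleGraph V)
    [DecidableRel G.Adj] (j : ℕ) (x : V) (S : Finset V) : ℕ :=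
  (Finset.univ.filter fun p : Fin (j + 1) → V =>
    G.IsWalkFun j p ∧ p 0 = x ∧ ∀ l, p l ∉ S).card

/-- `σ_max`: the largest singular value of the adjacency matrix of `G`,
i.e. its ℓ²→ℓ² operator norm. -/
noncomputable def SimpleGraph.sigmaMax {V : Type*} [Fintype V] [DecidableEq V]
    (G : SimpleGraph V) [DecidableRel G.Adj] : ℝ :=
  ‖Matrix.toEuclideanCLM (𝕜 := ℝ) (G.adjMatrix ℝ)‖

/-- `ω_i(x) = Σ_z (A^i)_{xz}`: the number of walks of length `i` starting at `x`. -/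
noncomputable def SimpleGraph.omegaCount {V : Type*} [Fintype V] [DecidableEq V]
    (G : SimpleGraph V) [DecidableRel G.Adj] (i : ℕ) (x : V) : ℝ :=
  ∑ z : V, (G.adjMatrix ℝ ^ i) x z

/-- `GED(S) = Σ_{i=1}^∞ α^i φ_i(S)`. -/
noncomputable def SimpleGraph.GED {V : Type*} [Fintype V] [DecidableEq V] (G : SimpleGraph V)
    [DecidableRel G.Adj] (α : ℝ) (S : Finset V) : ℝ :=
  ∑' i : ℕ, α ^ (i + 1) * (G.phiCount (i + 1) S : ℝ)

/-- `GED_{≤ℓ}(S) = Σ_{i=1}^ℓ α^i φ_i(S)`. -/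
noncomputable def SimpleGraph.GEDle {V : Type*} [Fintype V] [DecidableEq V] (G : SimpleGraph V)
    [DecidableRel G.Adj] (α : ℝ) (ℓ : ℕ) (S : Finset V) : ℝ :=
  ∑ i ∈ Finset.range ℓ, α ^ (i + 1) * (G.phiCount (i + 1) S : ℝ)

/-- `GED_{>ℓ}(S) = Σ_{i=ℓ+1}^∞ α^i φ_i(S)`. -/
noncomputable def SimpleGraph.GEDtail {V : Type*} [Fintype V] [DecidableEq V] (G : SimpleGraph V)
    [DecidableRel G.Adj] (α : ℝ) (ℓ : ℕ) (S : Finset V) : ℝ :=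
  ∑' i : ℕ, α ^ (ℓ + 1 + i) * (G.phiCount (ℓ + 1 + i) S : ℝ)

/-- `KC(x) = Σ_{i=1}^∞ α^i ω_i(x)`: Katz centrality of `x`. -/
noncomputable def SimpleGraph.katz {V : Type*} [Fintype V] [DecidableEq V] (G : SimpleGraph V)
    [DecidableRel G.Adj] (α : ℝ) (x : V) : ℝ :=
  ∑' i : ℕ, α ^ (i + 1) * G.omegaCount (i + 1) x

/-!
A walk counted by `φ_k(S)` is in particular a walk, and the walks of length `k` from `x` to `z`
are counted by the entry `(A^k)_{xz}`. An entry of a matrix is bounded by its ℓ² operator norm,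
and `‖A^k‖ ≤ σ_max^k`, so `φ_k(S) ≤ |V|² σ_max^k`: the tail is dominated termwise by
`|V|² (α σ_max)^k`, a geometric series.
-/

open Finset

lemma Matrix.norm_entry_le_norm_toEuclideanCLM {𝕜 n : Type*} [RCLike 𝕜] [Fintype n]
    [DecidableEq n] (M : Matrix n n 𝕜) (i j : n) :
    ‖M i j‖ ≤ ‖Matrix.toEuclideanCLM (𝕜 := 𝕜) M‖ := by
  set e : EuclideanSpace 𝕜 n := WithLp.toLp 2 (Pi.single j 1)
  have hcol : Matrix.toEuclideanCLM (𝕜 := 𝕜) M e i = M i j := by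
    simp [e]
  calc ‖M i j‖ = ‖Matrix.toEuclideanCLM (𝕜 := 𝕜) M e i‖ := by rw [hcol]
    _ ≤ ‖Matrix.toEuclideanCLM (𝕜 := 𝕜) M e‖ := PiLp.norm_apply_le _ _
    _ ≤ ‖Matrix.toEuclideanCLM (𝕜 := 𝕜) M‖ * ‖e‖ := ContinuousLinearMap.le_opNorm _ _
    _ = ‖Matrix.toEuclideanCLM (𝕜 := 𝕜) M‖ := by simp [e]

lemma tsum_le_div_of_le_geometric {f : ℕ → ℝ} {c r : ℝ} (hr₀ : 0 ≤ r) (hr₁ : r < 1)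
    (hf₀ : ∀ i, 0 ≤ f i) (hf : ∀ i, f i ≤ c * r ^ i) : ∑' i, f i ≤ c / (1 - r) := by
  have hgeom : Summable fun i ↦ c * r ^ i := (summable_geometric_of_lt_one hr₀ hr₁).mul_left c
  calc ∑' i, f i ≤ ∑' i, c * r ^ i :=
        (hgeom.of_nonneg_of_le hf₀ hf).tsum_le_tsum hf hgeom
    _ = c / (1 - r) := by rw [tsum_mul_left, tsum_geometric_of_lt_one hr₀ hr₁, div_eq_mul_inv]

namespace SimpleGraph

variable {V : Type*} (G : SimpleGraph V)

lemma isWalkFun_succ_iff {i : ℕ} (p : Fin (i + 2) → V) :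
    G.IsWalkFun (i + 1) p ↔ G.Adj (p 0) (p 1) ∧ G.IsWalkFun i (Fin.tail p) := by
  simp [IsWalkFun, Fin.forall_fin_succ, Fin.tail]

variable [Fintype V] [DecidableEq V] [DecidableRel G.Adj]

def walkFunCount (i : ℕ) (x z : V) : ℕ :=
  #{p : Fin (i + 1) → V | G.IsWalkFun i p ∧ p 0 = x ∧ p (Fin.last i) = z}

lemma walkFunCount_zero (x z : V) : G.walkFunCount 0 x z = if x = z then 1 else 0 := by
  split_ifs with hxz
  · subst hxz
    refine card_eq_one.mpr ⟨fun _ ↦ x, ?_⟩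
    ext p
    simp only [mem_filter, mem_univ, true_and, mem_singleton]
    constructor
    · rintro ⟨-, hp, -⟩
      funext k
      rwa [Fin.fin_one_eq_zero k]
    · rintro rfl
      exact ⟨finZeroElim, rfl, rfl⟩
  · refine card_eq_zero.mpr (filter_eq_empty_iff.mpr ?_)
    rintro p - ⟨-, hx, hz⟩
    exact hxz (hx.symm.trans hz)

lemma walkFunCount_succ (i : ℕ) (x z : V) :
    G.walkFunCount (i + 1) x z = ∑ y ∈ G.neighborFinset x, G.walkFunCount i y z := by
  rw [walkFunCount, card_eq_sum_card_fiberwise (f := fun p ↦ p 1) (t := G.neighborFinset x)]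
  · refine sum_congr rfl fun y hxy ↦ ?_
    refine card_nbij' Fin.tail (fun q ↦ (Fin.cons x q : Fin (i + 2) → V)) ?_ ?_
      (fun p hp ↦ ?_) (fun q _ ↦ Fin.tail_cons _ _)
    · intro p hp
      simp only [mem_coe, mem_filter, mem_univ, true_and] at hp ⊢
      obtain ⟨⟨hw, -, hz⟩, hy⟩ := hp
      exact ⟨((G.isWalkFun_succ_iff p).1 hw).2, hy, hz⟩
    · intro q hq
      simp only [mem_coe, mem_filter, mem_univ, true_and] at hq ⊢
      obtain ⟨hw, rfl, rfl⟩ := hq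
      refine ⟨⟨(G.isWalkFun_succ_iff _).2 ⟨?_, ?_⟩, rfl, ?_⟩, rfl⟩
      · simpa using hxy
      · simpa using hw
      · simp [← Fin.succ_last]
    · simp only [mem_coe, mem_filter, mem_univ, true_and] at hp
      rw [← hp.1.2.1]
      exact Fin.cons_self_tail p
  · simp only [Set.MapsTo, mem_coe, mem_filter, mem_univ, true_and, mem_neighborFinset]
    rintro p ⟨hw, rfl, -⟩
    exact ((G.isWalkFun_succ_iff p).1 hw).1

lemma adjMatrix_pow_apply_eq_walkFunCount (i : ℕ) (x z : V) :
    (G.adjMatrix ℝ ^ i) x z = G.walkFunCount i x z := by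
  induction i generalizing x with
  | zero => simp [walkFunCount_zero, Matrix.one_apply]
  | succ i ih => simp [pow_succ', adjMatrix_mul_apply, walkFunCount_succ, ih]

lemma walkCount_eq_sum_walkFunCount (i : ℕ) :
    G.walkCount i = ∑ x, ∑ z, G.walkFunCount i x z := by
  rw [walkCount, card_eq_sum_card_fiberwise (f := fun p ↦ (p 0, p (Fin.last i))) (t := univ)
    fun _ _ ↦ mem_univ _, Fintype.sum_prod_type]
  simp only [walkFunCount, filter_filter, Prod.ext_iff]

lemma phiCount_le_walkCount (i : ℕ) (S : Finset V) : G.phiCount i S ≤ G.walkCount i :=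
  card_le_card <| monotone_filter_right _ fun _ _ ↦ And.left

lemma walkCount_le_card_sq_mul_sigmaMax_pow {k : ℕ} (hk : 0 < k) :
    (G.walkCount k : ℝ) ≤ Fintype.card V ^ 2 * G.sigmaMax ^ k := by
  have hentry (x z : V) : (G.adjMatrix ℝ ^ k) x z ≤ G.sigmaMax ^ k :=
    calc (G.adjMatrix ℝ ^ k) x z
        ≤ ‖Matrix.toEuclideanCLM (𝕜 := ℝ) (G.adjMatrix ℝ ^ k)‖ :=
          (Real.le_norm_self _).trans (Matrix.norm_entry_le_norm_toEuclideanCLM _ x z)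
      _ ≤ G.sigmaMax ^ k := by rw [map_pow]; exact norm_pow_le' _ hk
  calc (G.walkCount k : ℝ) = ∑ x, ∑ z, (G.adjMatrix ℝ ^ k) x z := by
        simp [walkCount_eq_sum_walkFunCount, adjMatrix_pow_apply_eq_walkFunCount]
    _ ≤ ∑ _x : V, ∑ _z : V, G.sigmaMax ^ k := by gcongr with x _ z _; exact hentry x z
    _ = Fintype.card V ^ 2 * G.sigmaMax ^ k := by simp [sq, mul_assoc]

end SimpleGraph

theorem ged_tail_le_general {V : Type*} [Fintype V] [DecidableEq V]
    (G : SimpleGraph V) [DecidableRel G.Adj] (α : ℝ) (hα : 0 < α)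
    (h : α * G.sigmaMax < 1) (S : Finset V) (ℓ : ℕ) :
    G.GEDtail α ℓ S ≤
      (Fintype.card V : ℝ) ^ 2 * (α * G.sigmaMax) ^ (ℓ + 1) / (1 - α * G.sigmaMax) := by
  have hσ : 0 ≤ G.sigmaMax := norm_nonneg _
  refine tsum_le_div_of_le_geometric (by positivity) h (fun i ↦ by positivity) fun i ↦ ?_
  calc α ^ (ℓ + 1 + i) * (G.phiCount (ℓ + 1 + i) S : ℝ)
      ≤ α ^ (ℓ + 1 + i) * (Fintype.card V ^ 2 * G.sigmaMax ^ (ℓ + 1 + i)) := by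
        gcongr
        exact (Nat.cast_le.mpr (G.phiCount_le_walkCount _ S)).trans
          (G.walkCount_le_card_sq_mul_sigmaMax_pow (by omega))
    _ = Fintype.card V ^ 2 * (α * G.sigmaMax) ^ (ℓ + 1) * (α * G.sigmaMax) ^ i := by
        rw [mul_pow, pow_add α, pow_add G.sigmaMax]; ring

/-- `GED_{>ℓ}(S) ≤ |V|² (α σ_max)^{ℓ+1} / (1 − α σ_max)`. -/
theorem ged_tail_le {V : Type*} [Fintype V] [DecidableEq V] [Nonempty V]
    (G : SimpleGraph V) [DecidableRel G.Adj] (α : ℝ) (hα : 0 < α)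
    (h : α * G.sigmaMax < 1) (S : Finset V) (ℓ : ℕ) (hℓ : 1 ≤ ℓ) :
    G.GEDtail α ℓ S ≤
      (Fintype.card V : ℝ) ^ 2 * (α * G.sigmaMax) ^ (ℓ + 1) / (1 - α * G.sigmaMax) :=
  ged_tail_le_general G α hα h S ℓ
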